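/- Let ρ be a regular representation of A_{q,n} on an n-dimensional k-vector space V. Then there exists a k-algebra automorphism α of A_{q,n} such that α(q_1) = ker(ρ), where q_1 is the ideal of A_{q,n} generated by x_2, …, x_q. In particular, ker(ρ) is generated by the elements α(x_2), …, α(x_q). -/

import Mathlib

noncomputable section

/-- The ring of `n`-nil polynomials `A_{q,n} = k[x_1,…,x_q]/m_0^n`. -/
abbrev Aqn (k : Type) [Field k] (q n : ℕ) : Type :=
  MvPolynomial (Fin q) k ⧸
    (Ideal.span (Set.range (MvPolynomial.X : Fin q → MvPolynomial (Fin q) k))) ^ n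

/-- The image of the variable `x_i` in `A_{q,n}`. -/
def xA (k : Type) [Field k] (q n : ℕ) (i : Fin q) : Aqn k q n :=
  Ideal.Quotient.mk _ (MvPolynomial.X i)

/-- The maximal ideal `m` of `A_{q,n}` generated by `x_1, …, x_q`. -/
def mA (k : Type) [Field k] (q n : ℕ) : Ideal (Aqn k q n) :=
  Ideal.span (Set.range (xA k q n))

/-- The ideal `q_1` of `A_{q,n}` generated by `x_2, …, x_q`. -/
def q1A (k : Type) [Field k] (q n : ℕ) [NeZero q] : Ideal (Aqn k q n) :=
  Ideal.span {y | ∃ i : Fin q, i ≠ 0 ∧ y = xA k q n i}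

/-! Let `N = ρ u`. As `N ^ (n - 1) ≠ 0` on an `n`-dimensional space, `N` is a regular nilpotent
with a cyclic vector, so its commutant is `k[N]` and every `ρ x_i` is a polynomial in `N` without
constant term. Some `ρ x_{i₀}` must have a nonzero linear coefficient (otherwise `N` itself would
lie in `N² k[N]`), so `N' = ρ x_{i₀}` is again regular and `ρ x_i = h_i(N')` with `h_i(0) = 0`.
The automorphism `α` with `x_1 ↦ x_{i₀}` and the other generators sent to the elements
`x_i - h_i(x_{i₀})` of `ker ρ` then works: modulo `α(q_1)` every element is a polynomial in
`x_{i₀}`, and `P(N') = 0` forces `X ^ n ∣ P` because `N'` has nilpotency index exactly `n`. -/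

open Polynomial

namespace Module.End

variable {k V : Type*} [Field k] [AddCommGroup V] [Module k V] {N : Module.End k V} {n : ℕ}

theorem pow_mul_aeval_of_pow_succ_eq_zero (hN : N ^ (n + 1) = 0) (p : k[X]) :
    N ^ n * aeval N p = p.coeff 0 • N ^ n := by
  conv_lhs => rw [← X_mul_divX_add p]
  rw [map_add, map_mul, aeval_X, aeval_C, mul_add, ← mul_assoc, ← pow_succ, hN, zero_mul,
    zero_add, ← Algebra.commutes, ← Algebra.smul_def]

variable {v : V}

theorem X_pow_dvd_of_aeval_apply_eq_zero (hN : N ^ (n + 1) = 0) (hv : (N ^ n) v ≠ 0)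
    {p : k[X]} (hp : aeval N p v = 0) : X ^ (n + 1) ∣ p := by
  suffices ∀ m ≤ n + 1, X ^ m ∣ p from this _ le_rfl
  intro m hm
  induction m with
  | zero => simp
  | succ m ih =>
    obtain ⟨r, rfl⟩ := ih (by omega)
    have hr : (N ^ n * aeval N r) v = 0 := by
      calc (N ^ n * aeval N r) v = (N ^ (n - m)) (aeval N (X ^ m * r) v) := by
            rw [map_mul, map_pow, aeval_X, ← Module.End.mul_apply, ← mul_assoc, ← pow_add,
              Nat.sub_add_cancel (by omega)]
        _ = 0 := by rw [hp, map_zero]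
    rw [pow_mul_aeval_of_pow_succ_eq_zero hN, LinearMap.smul_apply, smul_eq_zero] at hr
    rw [pow_succ]
    exact mul_dvd_mul_left _ (X_dvd_iff.2 (hr.resolve_right hv))

theorem exists_aeval_apply_eq (hN : N ^ (n + 1) = 0) (hv : (N ^ n) v ≠ 0)
    (hdim : Module.finrank k V = n + 1) (w : V) : ∃ p : k[X], aeval N p v = w := by
  have : FiniteDimensional k V := Module.finite_of_finrank_pos (by omega)
  let f : degreeLT k (n + 1) →ₗ[k] V :=
    LinearMap.applyₗ v ∘ₗ (aeval N).toLinearMap ∘ₗ (degreeLT k (n + 1)).subtype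
  have hf : Function.Injective f := by
    refine (injective_iff_map_eq_zero f).2 fun p hp => Subtype.ext ?_
    refine eq_zero_of_dvd_of_degree_lt (X_pow_dvd_of_aeval_apply_eq_zero hN hv hp) ?_
    rw [degree_X_pow]
    exact mem_degreeLT.1 p.2
  have hrank : Module.finrank k (degreeLT k (n + 1)) = Module.finrank k V := by
    rw [(degreeLTEquiv k (n + 1)).finrank_eq, Module.finrank_fin_fun, hdim]
  obtain ⟨p, hp⟩ := (LinearMap.injective_iff_surjective_of_finrank_eq_finrank hrank).1 hf w
  exact ⟨p, hp⟩

theorem exists_eq_aeval_of_commute (hN : N ^ (n + 1) = 0) (hv : (N ^ n) v ≠ 0)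
    (hdim : Module.finrank k V = n + 1) {T : Module.End k V} (hT : Commute N T) :
    ∃ p : k[X], T = aeval N p := by
  obtain ⟨p, hp⟩ := exists_aeval_apply_eq hN hv hdim (T v)
  refine ⟨p, LinearMap.ext fun w => ?_⟩
  obtain ⟨r, rfl⟩ := exists_aeval_apply_eq hN hv hdim w
  have hTr : Commute T (aeval N r) :=
    Algebra.commute_of_mem_adjoin_singleton_of_commute (aeval_mem_adjoin_singleton k N) hT.symm
  calc T (aeval N r v) = aeval N r (T v) := LinearMap.congr_fun hTr.eq v
    _ = aeval N p (aeval N r v) := by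
      rw [← hp, ← Module.End.mul_apply, ← map_mul, mul_comm, map_mul, Module.End.mul_apply]

theorem X_dvd_of_isNilpotent_aeval (hN : N ^ (n + 1) = 0) (hv : (N ^ n) v ≠ 0) {p : k[X]}
    (hp : IsNilpotent (aeval N p)) : X ∣ p := by
  obtain ⟨m, hm⟩ := hp
  have hdvd : X ^ (n + 1) ∣ p ^ m :=
    X_pow_dvd_of_aeval_apply_eq_zero hN hv (by rw [map_pow, hm, LinearMap.zero_apply])
  exact prime_X.dvd_of_dvd_pow ((dvd_pow_self X n.succ_ne_zero).trans hdvd)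

theorem exists_eq_aeval_X_mul_of_commute (hN : N ^ (n + 1) = 0) (hv : (N ^ n) v ≠ 0)
    (hdim : Module.finrank k V = n + 1) {T : Module.End k V} (hT : Commute N T)
    (hT_nil : IsNilpotent T) : ∃ r : k[X], T = aeval N (X * r) := by
  obtain ⟨p, rfl⟩ := exists_eq_aeval_of_commute hN hv hdim hT
  obtain ⟨r, rfl⟩ := X_dvd_of_isNilpotent_aeval hN hv hT_nil
  exact ⟨r, rfl⟩

theorem pow_aeval_X_mul_apply_ne_zero (hN : N ^ (n + 1) = 0) (hv : (N ^ n) v ≠ 0) {r : k[X]}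
    (hr : ¬ X ∣ r) : (aeval N (X * r) ^ n) v ≠ 0 := by
  intro h
  have hdvd : X ^ (n + 1) ∣ X ^ n * r ^ n := by
    rw [← mul_pow]
    exact X_pow_dvd_of_aeval_apply_eq_zero hN hv (by rwa [map_pow])
  rw [pow_succ, mul_dvd_mul_iff_left (pow_ne_zero n X_ne_zero)] at hdvd
  exact hr (prime_X.dvd_of_dvd_pow hdvd)

end Module.End

namespace Aqn

variable {k : Type} [Field k] {q n : ℕ}

theorem mA_pow_eq_bot : mA k q n ^ n = ⊥ := by
  have hmap : mA k q n = (Ideal.span (Set.range (MvPolynomial.X (R := k) (σ := Fin q)))).map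
      (Ideal.Quotient.mk _) := by
    rw [mA, Ideal.map_span, ← Set.range_comp]
    rfl
  rw [hmap, ← Ideal.map_pow, Ideal.map_quotient_self]

theorem pow_eq_zero_of_mem_mA {u : Aqn k q n} (hu : u ∈ mA k q n) : u ^ n = 0 := by
  simpa [mA_pow_eq_bot] using Ideal.pow_mem_pow hu n

theorem isNilpotent_of_mem_mA {u : Aqn k q n} (hu : u ∈ mA k q n) : IsNilpotent u :=
  ⟨n, pow_eq_zero_of_mem_mA hu⟩

theorem xA_mem_mA (i : Fin q) : xA k q n i ∈ mA k q n :=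
  Ideal.subset_span ⟨i, rfl⟩

theorem aeval_eq_zero_of_X_pow_dvd {u : Aqn k q n} (hu : u ∈ mA k q n) {P : k[X]}
    (hP : X ^ n ∣ P) : aeval u P = 0 := by
  obtain ⟨Q, rfl⟩ := hP
  rw [map_mul, map_pow, aeval_X, pow_eq_zero_of_mem_mA hu, zero_mul]

theorem adjoin_range_xA : Algebra.adjoin k (Set.range (xA k q n)) = ⊤ := by
  rw [show xA k q n = Ideal.Quotient.mkₐ k _ ∘ MvPolynomial.X from rfl, Set.range_comp,
    Algebra.adjoin_image, MvPolynomial.adjoin_range_X, Algebra.map_top, AlgHom.range_eq_top]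
  exact Ideal.Quotient.mkₐ_surjective k _

theorem surjective_of_forall_xA_mem_range {B C : Type*} [Semiring B] [Algebra k B] [Semiring C]
    [Algebra k C] (f : Aqn k q n →ₐ[k] C) (hf : Function.Surjective f) (g : B →ₐ[k] C)
    (h : ∀ i, f (xA k q n i) ∈ g.range) : Function.Surjective g := by
  rw [← AlgHom.range_eq_top, eq_top_iff, ← (AlgHom.range_eq_top f).2 hf, ← Algebra.map_top,
    ← adjoin_range_xA, ← Algebra.adjoin_image, Algebra.adjoin_le_iff]
  rintro _ ⟨_, ⟨i, rfl⟩, rfl⟩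
  exact h i

instance : Module.Finite k (Aqn k q n) := by
  have : Algebra.IsIntegral k (Aqn k q n) := by
    refine ⟨fun a => ?_⟩
    suffices Algebra.adjoin k (Set.range (xA k q n)) ≤ integralClosure k (Aqn k q n) from
      this (adjoin_range_xA (k := k) ▸ Algebra.mem_top)
    rw [Algebra.adjoin_le_iff]
    rintro _ ⟨i, rfl⟩
    refine IsIntegral.of_pow n.succ_pos ?_
    rw [pow_succ, pow_eq_zero_of_mem_mA (xA_mem_mA i), zero_mul]
    exact isIntegral_zero
  exact Algebra.IsIntegral.finite

def lift {B : Type*} [CommRing B] [Algebra k B] (I : Ideal B) (hI : I ^ n = ⊥) (w : Fin q → B)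
    (hw : ∀ i, w i ∈ I) : Aqn k q n →ₐ[k] B :=
  Ideal.Quotient.liftₐ _ (MvPolynomial.aeval w) fun a ha => by
    have hle :
        (Ideal.span (Set.range (MvPolynomial.X (R := k)))).map (MvPolynomial.aeval w) ≤ I := by
      rw [Ideal.map_span, Ideal.span_le, ← Set.range_comp]
      rintro _ ⟨i, rfl⟩
      simpa using hw i
    have hmem : MvPolynomial.aeval w a ∈ I ^ n := by
      refine Ideal.pow_right_mono hle n ?_
      rw [← Ideal.map_pow]
      exact Ideal.mem_map_of_mem _ ha
    rwa [hI, Ideal.mem_bot] at hmem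

theorem lift_xA {B : Type*} [CommRing B] [Algebra k B] (I : Ideal B) (hI : I ^ n = ⊥)
    (w : Fin q → B) (hw : ∀ i, w i ∈ I) (i : Fin q) : lift I hI w hw (xA k q n i) = w i :=
  MvPolynomial.aeval_X w i

section q1A

variable [NeZero q]

theorem xA_mem_q1A {i : Fin q} (hi : i ≠ 0) : xA k q n i ∈ q1A k q n :=
  Ideal.subset_span ⟨i, hi, rfl⟩

theorem exists_sub_aeval_mem_q1A (z : Aqn k q n) :
    ∃ P : k[X], z - aeval (xA k q n 0) P ∈ q1A k q n := by
  have hsurj : Function.Surjective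
      ((Ideal.Quotient.mkₐ k (q1A k q n)).comp (aeval (xA k q n 0))) := by
    refine surjective_of_forall_xA_mem_range _ (Ideal.Quotient.mkₐ_surjective k _) _
      fun i => ?_
    by_cases hi : i = 0
    · exact ⟨X, by simp [hi]⟩
    · refine ⟨0, ?_⟩
      rw [map_zero, eq_comm, Ideal.Quotient.mkₐ_eq_mk, Ideal.Quotient.eq_zero_iff_mem]
      exact xA_mem_q1A hi
  obtain ⟨P, hP⟩ := hsurj (Ideal.Quotient.mkₐ k _ z)
  exact ⟨P, Ideal.Quotient.eq.1 hP.symm⟩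

theorem exists_map_q1A_eq_ker {B : Type*} [Ring B] [Algebra k B] (ρ : Aqn k q n →ₐ[k] B)
    (i₀ : Fin q) (h : Fin q → k[X])
    (hρ : ∀ i, ρ (xA k q n i) = aeval (ρ (xA k q n i₀)) (X * h i))
    (hmin : ∀ P : k[X], aeval (ρ (xA k q n i₀)) P = 0 → X ^ n ∣ P) :
    ∃ α : Aqn k q n ≃ₐ[k] Aqn k q n, Ideal.map α (q1A k q n) = RingHom.ker ρ := by
  set x := xA k q n
  set σ := Equiv.swap 0 i₀
  let w : Fin q → Aqn k q n := fun j =>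
    if j = 0 then x i₀ else x (σ j) - x i₀ * aeval (x i₀) (h (σ j))
  have hw : ∀ j, w j ∈ mA k q n := fun j => by
    by_cases hj : j = 0
    · simpa [w, hj] using xA_mem_mA i₀
    · simpa [w, hj] using sub_mem (xA_mem_mA _) (Ideal.mul_mem_right _ _ (xA_mem_mA _))
  set f : Aqn k q n →ₐ[k] Aqn k q n := lift (mA k q n) mA_pow_eq_bot w hw
  have hf₀ : f (x 0) = x i₀ := by simp [f, x, lift_xA, w]
  have hf : ∀ j ≠ 0, f (x j) = x (σ j) - x i₀ * aeval (x i₀) (h (σ j)) := fun j hj => by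
    simp [f, x, lift_xA, w, hj]
  have hsurj : Function.Surjective f := by
    refine surjective_of_forall_xA_mem_range (AlgHom.id k _) Function.surjective_id f
      fun i => ?_
    by_cases hi : i = i₀
    · exact ⟨x 0, hi ▸ hf₀⟩
    · have hσi : σ i ≠ 0 := by simpa [σ, Equiv.swap_apply_eq_iff] using hi
      refine ⟨x (σ i) + aeval (x 0) (X * h i), ?_⟩
      change f _ = x i
      rw [map_add, hf _ hσi, Equiv.swap_apply_self, ← aeval_algHom_apply, hf₀, map_mul,
        aeval_X, sub_add_cancel]
  -- a surjective endomorphism of a finite-dimensional algebra is bijective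
  let α := AlgEquiv.ofBijective f
    ⟨LinearMap.injective_iff_surjective (f := f.toLinearMap).2 hsurj, hsurj⟩
  have hle : Ideal.map α (q1A k q n) ≤ RingHom.ker ρ := by
    rw [Ideal.map_le_iff_le_comap, q1A, Ideal.span_le]
    rintro _ ⟨j, hj, rfl⟩
    show ρ (f (x j)) = 0
    rw [hf j hj, map_sub, map_mul, ← aeval_algHom_apply, hρ (σ j), map_mul, aeval_X, sub_self]
  refine ⟨α, le_antisymm hle fun y hy => ?_⟩
  obtain ⟨P, hP⟩ := exists_sub_aeval_mem_q1A (α.symm y)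
  have hPρ : aeval (ρ (x i₀)) P = 0 := by
    have hker : ρ (α (α.symm y - aeval (x 0) P)) = 0 := hle (Ideal.mem_map_of_mem _ hP)
    rw [map_sub, α.apply_symm_apply, map_sub, RingHom.mem_ker.1 hy, zero_sub, neg_eq_zero,
      ← aeval_algHom_apply, ← aeval_algHom_apply] at hker
    rwa [← hf₀]
  rw [aeval_eq_zero_of_X_pow_dvd (xA_mem_mA 0) (hmin P hPρ), sub_zero] at hP
  simpa using Ideal.mem_map_of_mem α hP

end q1A

theorem exists_pow_map_xA_apply_ne_zero {V : Type*} [AddCommGroup V] [Module k V]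
    (ρ : Aqn k q (n + 1) →ₐ[k] Module.End k V) (hdim : Module.finrank k V = n + 1)
    (hn : 1 ≤ n)
    {u : Aqn k q (n + 1)} (hu : u ∈ mA k q (n + 1)) (hu_reg : ρ u ^ n ≠ 0) :
    ∃ (i : Fin q) (v : V), (ρ (xA k q (n + 1) i) ^ n) v ≠ 0 := by
  have hN : ρ u ^ (n + 1) = 0 := by rw [← map_pow, pow_eq_zero_of_mem_mA hu, map_zero]
  obtain ⟨v, hv⟩ : ∃ v, (ρ u ^ n) v ≠ 0 := not_forall.1 fun h => hu_reg (LinearMap.ext h)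
  have hcomm : ∀ a, Commute (ρ u) (ρ a) := fun a => (Commute.all u a).map ρ
  -- otherwise every `ρ x_i`, hence also `ρ u`, lies in `(ρ u) ^ 2 * k[ρ u]`
  by_contra! hall
  have hX2 : ∀ i, ∃ s : k[X], ρ (xA k q (n + 1) i) = aeval (ρ u) (X ^ 2 * s) := fun i => by
    obtain ⟨r, hr⟩ := Module.End.exists_eq_aeval_X_mul_of_commute hN hv hdim (hcomm _)
      ((isNilpotent_of_mem_mA (xA_mem_mA i)).map ρ)
    obtain ⟨s, rfl⟩ : X ∣ r :=
      by_contra fun hr' => Module.End.pow_aeval_X_mul_apply_ne_zero hN hv hr' (hr ▸ hall i v)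
    exact ⟨s, by rw [hr, pow_two, mul_assoc]⟩
  choose s hs using hX2
  obtain ⟨c, hc⟩ := Ideal.mem_span_range_iff_exists_fun.1 hu
  choose P hP using fun i => Module.End.exists_eq_aeval_of_commute hN hv hdim (hcomm (c i))
  have hu_eq : ρ u = aeval (ρ u) (∑ i, P i * (X ^ 2 * s i)) := by
    conv_lhs => rw [← hc]
    simp only [map_sum, map_mul, hP, hs]
  have hdvd : X ^ (n + 1) ∣ X - ∑ i, P i * (X ^ 2 * s i) :=
    Module.End.X_pow_dvd_of_aeval_apply_eq_zero hN hv
      (by rw [map_sub, aeval_X, ← hu_eq, sub_self]; rfl)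
  have hX : (X : k[X]) ^ 2 ∣ X := by
    have h2 := (pow_dvd_pow X (by omega : 2 ≤ n + 1)).trans hdvd
    have hsum : X ^ 2 ∣ ∑ i, P i * (X ^ 2 * s i) :=
      Finset.dvd_sum fun i _ => (dvd_mul_right _ _).mul_left (P i)
    simpa using h2.add hsum
  simpa using X_pow_dvd_iff.1 hX 1 one_lt_two

end Aqn

open Module.End Aqn

theorem ker_of_regular_rep_is_translate_of_q1_general (k : Type) [Field k] (q n : ℕ) [NeZero q]
    (hn : 2 ≤ n)
    (V : Type) [AddCommGroup V] [Module k V]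
    (hdim : Module.finrank k V = n)
    (ρ : Aqn k q n →ₐ[k] Module.End k V)
    (hreg : ∃ u ∈ mA k q n, ρ (u ^ (n - 1)) ≠ 0) :
    ∃ α : Aqn k q n ≃ₐ[k] Aqn k q n,
      Ideal.map α (q1A k q n) = RingHom.ker ρ := by
  obtain ⟨n, rfl⟩ : ∃ m, n = m + 1 := ⟨n - 1, by omega⟩
  obtain ⟨u, hu, hu_reg⟩ := hreg
  obtain ⟨i₀, v, hv⟩ := exists_pow_map_xA_apply_ne_zero ρ hdim (by omega) hu
    (by simpa using hu_reg)
  have hN : ρ (xA k q (n + 1) i₀) ^ (n + 1) = 0 := by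
    rw [← map_pow, pow_eq_zero_of_mem_mA (xA_mem_mA i₀), map_zero]
  choose h hh using fun i => exists_eq_aeval_X_mul_of_commute hN hv hdim
    ((Commute.all _ (xA k q (n + 1) i)).map ρ) ((isNilpotent_of_mem_mA (xA_mem_mA i)).map ρ)
  exact exists_map_q1A_eq_ker ρ i₀ h hh fun P hP =>
    X_pow_dvd_of_aeval_apply_eq_zero hN hv (by rw [hP, LinearMap.zero_apply])

/-- the kernel of a regular representation of `A_{q,n}` is the image of the
ideal `q_1 = (x_2, …, x_q)` under some `k`-algebra automorphism of `A_{q,n}`. -/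
theorem ker_of_regular_rep_is_translate_of_q1 (k : Type) [Field k] (q n : ℕ) [NeZero q]
    (hq : 2 ≤ q) (hn : 2 ≤ n)
    (V : Type) [AddCommGroup V] [Module k V] [FiniteDimensional k V]
    (hdim : Module.finrank k V = n)
    (ρ : Aqn k q n →ₐ[k] Module.End k V)
    (hreg : ∃ u ∈ mA k q n, ρ (u ^ (n - 1)) ≠ 0) :
    ∃ α : Aqn k q n ≃ₐ[k] Aqn k q n,
      Ideal.map α (q1A k q n) = RingHom.ker ρ :=
  ker_of_regular_rep_is_translate_of_q1_general k q n hn V hdim ρ hreg
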